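/- Let k ≥ 2 be an integer, let H_D be a diagonal graph on V = {(i,j) : 0 ≤ i,j ≤ k−1}, and suppose that no connected component of H_D contains both a vertex of the top row and a vertex of the bottom row. Then every vertex of degree 1 in the boundary graph H_B lies on the left border or on the right border of the grid; moreover, the number of degree-1 vertices of H_B on the left border is odd, and the number of degree-1 vertices of H_B on the right border is odd. -/

import Mathlib

open SimpleGraph

/-- `H` is a diagonal graph on `{(i,j) : 0 ≤ i,j ≤ k-1}`: for every `(i,j)` with
`0 ≤ i,j ≤ k-2`, exactly one of the two diagonals `{(i,j),(i+1,j+1)}` and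
`{(i,j+1),(i+1,j)}` of the corresponding 2×2 square is an edge of `H`, and `H` has no
other edges. -/
def IsDiagonalGraph (k : ℕ) (H : SimpleGraph (Fin k × Fin k)) : Prop :=
  (∀ (i j : ℕ) (hi : i + 1 < k) (hj : j + 1 < k),
    H.Adj (⟨i, by omega⟩, ⟨j, by omega⟩) (⟨i + 1, hi⟩, ⟨j + 1, hj⟩) ↔
      ¬ H.Adj (⟨i, by omega⟩, ⟨j + 1, hj⟩) (⟨i + 1, hi⟩, ⟨j, by omega⟩)) ∧
  (∀ u v : Fin k × Fin k, H.Adj u v →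
    ((u.1 : ℕ) + 1 = (v.1 : ℕ) ∨ (v.1 : ℕ) + 1 = (u.1 : ℕ)) ∧
    ((u.2 : ℕ) + 1 = (v.2 : ℕ) ∨ (v.2 : ℕ) + 1 = (u.2 : ℕ)))

/-- `V_U`: the set of vertices lying in connected components of `H` that contain at least one
vertex of the top row (row `k - 1`). -/
def upperVerts (k : ℕ) (H : SimpleGraph (Fin k × Fin k)) : Set (Fin k × Fin k) :=
  {v | ∃ u : Fin k × Fin k, (u.2 : ℕ) = k - 1 ∧ H.Reachable v u}

/-- The boundary graph `H_B` of a diagonal graph `H`: its edges are those edges `{a, b}` of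
`H` such that `a ∉ V_U`, `b ∉ V_U`, and exactly one of the two other corners `(a.1, b.2)`,
`(b.1, a.2)` of the 2×2 square having `{a, b}` as a diagonal lies in `V_U`. -/
def boundaryGraph (k : ℕ) (H : SimpleGraph (Fin k × Fin k)) :
    SimpleGraph (Fin k × Fin k) where
  Adj a b := H.Adj a b ∧ a ∉ upperVerts k H ∧ b ∉ upperVerts k H ∧
    ((a.1, b.2) ∈ upperVerts k H ↔ (b.1, a.2) ∉ upperVerts k H)
  symm := ⟨by
    rintro a b ⟨h1, h2, h3, h4⟩
    exact ⟨h1.symm, h3, h2, by tauto⟩⟩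
  loopless := ⟨fun a h => H.loopless.1 a h.1⟩

/-- The degree of a vertex in the boundary graph. -/
noncomputable def boundaryDegree (k : ℕ) (H : SimpleGraph (Fin k × Fin k))
    (v : Fin k × Fin k) : ℕ :=
  {u : Fin k × Fin k | (boundaryGraph k H).Adj v u}.ncard

/-!
For `v ∉ V_U` and a diagonal position `u` next to `v`, `u` is an `H_B`-neighbour of `v` iff
exactly one of the two other corners of their square lies in `V_U`: if `{v, u}` is not an edge
of `H_D`, the other diagonal is, and joins those two corners. Counting mod 2, the degree of `v` in
`H_B` is (number of columns next to `v`) × (number of `V_U`-vertices directly above or below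
`v`), the horizontal contribution vanishing because the bottom row misses `V_U` and every other
row has two neighbouring rows. So inner columns carry only even degrees. On a border column the
degree is at most 2, and it is 1 exactly when one of the two vertical neighbours is in `V_U`;
along the column, membership in `V_U` switches from false (bottom) to true (top), so the number
of such vertices is odd.
-/

open Finset

theorem natCast_card_filter_not_iff {ι : Type*} (s : Finset ι) (p q : ι → Prop)
    [DecidablePred p] [DecidablePred q] :
    (#(s.filter fun x => ¬ (p x ↔ q x)) : ZMod 2) = #(s.filter p) + #(s.filter q) := by
  simp only [natCast_card_filter, ← sum_add_distrib]
  refine sum_congr rfl fun x _ => ?_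
  by_cases hp : p x <;> by_cases hq : q x <;> simp [hp, hq]
  decide

-- At `j = 0` the truncated `j - 1` is `0`, harmless since `¬ u 0`.
theorem card_filter_exactly_one_neighbor_mod_two (u : ℕ → Prop) [DecidablePred u]
    (h0 : ¬ u 0) (m : ℕ) :
    #((range m).filter fun j => ¬ u j ∧ ¬ (u (j - 1) ↔ u (j + 1))) % 2 =
      if u (m - 1) ∨ u m then 1 else 0 := by
  induction m with
  | zero => simp [h0]
  | succ m ih =>
    rw [range_add_one, filter_insert]
    simp only [Nat.add_sub_cancel]
    split_ifs at ih ⊢ <;> simp_all [card_insert_of_notMem] <;> omega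

theorem odd_card_filter_exactly_one_neighbor (u : ℕ → Prop) [DecidablePred u] {n : ℕ}
    (h0 : ¬ u 0) (hn : u n) :
    Odd #((range n).filter fun j => ¬ u j ∧ ¬ (u (j - 1) ↔ u (j + 1))) := by
  rw [Nat.odd_iff, card_filter_exactly_one_neighbor_mod_two u h0, if_pos (Or.inr hn)]

def adjacentIndices (k i : ℕ) : Finset (Fin k) :=
  univ.filter fun x => (x : ℕ) + 1 = i ∨ i + 1 = x

section AdjacentIndices

variable {k : ℕ}

@[simp]
theorem mem_adjacentIndices {i : ℕ} {x : Fin k} :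
    x ∈ adjacentIndices k i ↔ (x : ℕ) + 1 = i ∨ i + 1 = x := by
  simp [adjacentIndices]

theorem card_adjacentIndices_le_two (i : ℕ) : #(adjacentIndices k i) ≤ 2 :=
  calc #(adjacentIndices k i) ≤ #({i - 1, i + 1} : Finset ℕ) :=
        card_le_card_of_injOn Fin.val (fun x hx => by simp at hx ⊢; omega) Fin.val_injective.injOn
    _ ≤ 2 := card_le_two

theorem adjacentIndices_zero (hk : 1 < k) : adjacentIndices k 0 = {⟨1, hk⟩} := by
  ext x; simp [Fin.ext_iff]; omega

theorem adjacentIndices_last (hk : 2 ≤ k) :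
    adjacentIndices k (k - 1) = {⟨k - 2, by omega⟩} := by
  ext x; simp [Fin.ext_iff]; omega

theorem adjacentIndices_of_pos {i : ℕ} (hi : 0 < i) (hik : i + 1 < k) :
    adjacentIndices k i = {⟨i - 1, by omega⟩, ⟨i + 1, hik⟩} := by
  ext x; simp [Fin.ext_iff]; omega

theorem card_adjacentIndices_of_pos {i : ℕ} (hi : 0 < i) (hik : i + 1 < k) :
    #(adjacentIndices k i) = 2 := by
  rw [adjacentIndices_of_pos hi hik, card_pair (by simp [Fin.ext_iff])]

theorem odd_card_filter_adjacentIndices_iff (p : ℕ → Prop) [DecidablePred p]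
    (hp0 : ¬ p 0) {j : ℕ} (hj : j + 1 < k) :
    Odd #((adjacentIndices k j).filter fun y : Fin k => p y) ↔ ¬ (p (j - 1) ↔ p (j + 1)) := by
  rcases Nat.eq_zero_or_pos j with rfl | hpos
  · rw [adjacentIndices_zero hj]
    by_cases h1 : p 1 <;> simp [filter_singleton, h1, hp0]
  · rw [adjacentIndices_of_pos hpos hj, filter_insert, filter_singleton]
    by_cases h1 : p (j - 1) <;> by_cases h2 : p (j + 1) <;>
      simp [h1, h2, card_insert_of_notMem, Fin.ext_iff]

end AdjacentIndices

section Grid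

variable {k : ℕ} {H : SimpleGraph (Fin k × Fin k)}

theorem mem_upperVerts_of_adj {v w : Fin k × Fin k} (h : H.Adj v w)
    (hv : v ∈ upperVerts k H) : w ∈ upperVerts k H :=
  let ⟨u, hu, hvu⟩ := hv
  ⟨u, hu, h.symm.reachable.trans hvu⟩

theorem mem_upperVerts_of_top {v : Fin k × Fin k} (hv : (v.2 : ℕ) = k - 1) :
    v ∈ upperVerts k H :=
  ⟨v, hv, .refl v⟩

theorem IsDiagonalGraph.adj_or_adj_of_square (hH : IsDiagonalGraph k H) {a b : Fin k × Fin k}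
    (h1 : (a.1 : ℕ) + 1 = b.1) (h2 : (a.2 : ℕ) + 1 = b.2) :
    H.Adj a b ∨ H.Adj (a.1, b.2) (b.1, a.2) := by
  obtain ⟨⟨i, _⟩, ⟨j, _⟩⟩ := a
  obtain ⟨⟨_, hi⟩, ⟨_, hj⟩⟩ := b
  dsimp only at h1 h2
  subst h1 h2
  have := hH.1 i j hi hj
  tauto

theorem IsDiagonalGraph.adj_or_adj_antidiagonal (hH : IsDiagonalGraph k H)
    {v u : Fin k × Fin k} (h1 : u.1 ∈ adjacentIndices k v.1)
    (h2 : u.2 ∈ adjacentIndices k v.2) :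
    H.Adj v u ∨ H.Adj (v.1, u.2) (u.1, v.2) := by
  rw [mem_adjacentIndices] at h1 h2
  rcases h1 with h1 | h1 <;> rcases h2 with h2 | h2
  · exact (hH.adj_or_adj_of_square (a := u) (b := v) h1 h2).imp Adj.symm Adj.symm
  · exact (hH.adj_or_adj_of_square (a := (u.1, v.2)) (b := (v.1, u.2)) h1 h2).symm.imp
      Adj.symm Adj.symm
  · exact (hH.adj_or_adj_of_square (a := (v.1, u.2)) (b := (u.1, v.2)) h1 h2).symm
  · exact hH.adj_or_adj_of_square h1 h2

theorem boundaryGraph_adj_iff (hH : IsDiagonalGraph k H) {v u : Fin k × Fin k}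
    (hv : v ∉ upperVerts k H) :
    (boundaryGraph k H).Adj v u ↔ u ∈ adjacentIndices k v.1 ×ˢ adjacentIndices k v.2 ∧
      ¬ ((v.1, u.2) ∈ upperVerts k H ↔ (u.1, v.2) ∈ upperVerts k H) := by
  constructor
  · rintro ⟨hvu, -, -, hcorners⟩
    obtain ⟨h1, h2⟩ := hH.2 v u hvu
    exact ⟨mem_product.2 ⟨by simpa [or_comm] using h1, by simpa [or_comm] using h2⟩,
      by tauto⟩
  · rintro ⟨hu, hcorners⟩
    rw [mem_product] at hu
    have hvu : H.Adj v u := by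
      refine (hH.adj_or_adj_antidiagonal hu.1 hu.2).resolve_right fun h => hcorners ?_
      exact ⟨mem_upperVerts_of_adj h, mem_upperVerts_of_adj h.symm⟩
    exact ⟨hvu, hv, fun hu => hv (mem_upperVerts_of_adj hvu.symm hu), by tauto⟩

end Grid

section BoundaryDegree

open scoped Classical

variable {k : ℕ} {H : SimpleGraph (Fin k × Fin k)}

theorem boundaryDegree_eq_card (hH : IsDiagonalGraph k H) {v : Fin k × Fin k}
    (hv : v ∉ upperVerts k H) :
    boundaryDegree k H v = #((adjacentIndices k v.1 ×ˢ adjacentIndices k v.2).filter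
      fun u => ¬ ((v.1, u.2) ∈ upperVerts k H ↔ (u.1, v.2) ∈ upperVerts k H)) := by
  rw [boundaryDegree, ← Set.ncard_coe_finset]
  congr 1
  ext u
  simp only [boundaryGraph_adj_iff hH hv, Set.mem_ofPred_eq, coe_filter]

theorem boundaryDegree_cast_zmod_two (hH : IsDiagonalGraph k H)
    (hbottom : ∀ v : Fin k × Fin k, (v.2 : ℕ) = 0 → v ∉ upperVerts k H)
    {v : Fin k × Fin k} (hv : v ∉ upperVerts k H) :
    (boundaryDegree k H v : ZMod 2) = #(adjacentIndices k v.1) *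
      #((adjacentIndices k v.2).filter fun y => (v.1, y) ∈ upperVerts k H) := by
  have hrow : (#((adjacentIndices k v.1).filter fun x => (x, v.2) ∈ upperVerts k H) *
      #(adjacentIndices k v.2) : ZMod 2) = 0 := by
    rcases Nat.eq_zero_or_pos (v.2 : ℕ) with h0 | hpos
    · rw [filter_false_of_mem (p := fun x => (x, v.2) ∈ upperVerts k H)
        fun x _ => hbottom (x, v.2) h0]
      simp
    · have hlt : (v.2 : ℕ) + 1 < k := by
        have := v.2.isLt
        have : (v.2 : ℕ) ≠ k - 1 := fun h => hv (mem_upperVerts_of_top h)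
        omega
      rw [card_adjacentIndices_of_pos hpos hlt, Nat.cast_ofNat, CharTwo.two_eq_zero (R := ZMod 2),
        mul_zero]
  rw [boundaryDegree_eq_card hH hv, natCast_card_filter_not_iff,
    filter_product_right (fun y => (v.1, y) ∈ upperVerts k H),
    filter_product_left (fun x => (x, v.2) ∈ upperVerts k H), card_product, card_product]
  push_cast
  rw [hrow, add_zero]

theorem boundaryDegree_ne_one_of_interior (hH : IsDiagonalGraph k H)
    (hbottom : ∀ v : Fin k × Fin k, (v.2 : ℕ) = 0 → v ∉ upperVerts k H)
    {v : Fin k × Fin k} (hv : v ∉ upperVerts k H) (h0 : 0 < (v.1 : ℕ))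
    (h1 : (v.1 : ℕ) + 1 < k) : boundaryDegree k H v ≠ 1 := by
  intro hdeg
  have := boundaryDegree_cast_zmod_two hH hbottom hv
  rw [hdeg, card_adjacentIndices_of_pos h0 h1, Nat.cast_one, Nat.cast_ofNat,
    CharTwo.two_eq_zero (R := ZMod 2), zero_mul] at this
  exact one_ne_zero this

theorem boundaryDegree_eq_one_iff_of_border (hH : IsDiagonalGraph k H)
    (hbottom : ∀ v : Fin k × Fin k, (v.2 : ℕ) = 0 → v ∉ upperVerts k H)
    {v : Fin k × Fin k} (hv : v ∉ upperVerts k H) (hborder : #(adjacentIndices k v.1) = 1) :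
    boundaryDegree k H v = 1 ↔
      Odd #((adjacentIndices k v.2).filter fun y => (v.1, y) ∈ upperVerts k H) := by
  have hle : boundaryDegree k H v ≤ 2 := by
    rw [boundaryDegree_eq_card hH hv]
    refine (card_filter_le _ _).trans ?_
    rw [card_product, hborder, one_mul]
    exact card_adjacentIndices_le_two _
  have hparity := boundaryDegree_cast_zmod_two hH hbottom hv
  rw [hborder, Nat.cast_one, one_mul] at hparity
  rw [← ZMod.natCast_eq_one_iff_odd, ← hparity]
  interval_cases boundaryDegree k H v <;> decide

def columnUpper (k : ℕ) (H : SimpleGraph (Fin k × Fin k)) (c : Fin k) (j : ℕ) : Prop :=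
  ∃ h : j < k, (c, ⟨j, h⟩) ∈ upperVerts k H

theorem columnUpper_iff {c : Fin k} (y : Fin k) :
    columnUpper k H c y ↔ (c, y) ∈ upperVerts k H :=
  ⟨fun ⟨_, h⟩ => h, fun h => ⟨y.isLt, h⟩⟩

theorem boundaryDegree_eq_one_iff_columnUpper (hH : IsDiagonalGraph k H)
    (hbottom : ∀ v : Fin k × Fin k, (v.2 : ℕ) = 0 → v ∉ upperVerts k H)
    {c : Fin k} (hborder : #(adjacentIndices k c) = 1) {j : ℕ} (hj : j < k) :
    (c, ⟨j, hj⟩) ∉ upperVerts k H ∧ boundaryDegree k H (c, ⟨j, hj⟩) = 1 ↔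
      ¬ columnUpper k H c j ∧ ¬ (columnUpper k H c (j - 1) ↔ columnUpper k H c (j + 1)) := by
  rw [← columnUpper_iff (H := H) (c := c) ⟨j, hj⟩]
  refine and_congr_right fun hv => ?_
  have hv' : (c, ⟨j, hj⟩) ∉ upperVerts k H := fun h => hv ((columnUpper_iff _).2 h)
  have hj' : j + 1 < k := by
    have : j ≠ k - 1 := fun h => hv' (mem_upperVerts_of_top h)
    omega
  have hp0 : ¬ columnUpper k H c 0 := fun ⟨_, h⟩ => hbottom _ rfl h
  rw [boundaryDegree_eq_one_iff_of_border hH hbottom hv' hborder,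
    ← odd_card_filter_adjacentIndices_iff _ hp0 hj']
  simp only [columnUpper_iff]

theorem odd_ncard_boundaryDegree_eq_one_of_border (hH : IsDiagonalGraph k H)
    (hbottom : ∀ v : Fin k × Fin k, (v.2 : ℕ) = 0 → v ∉ upperVerts k H)
    {c : Fin k} (hborder : #(adjacentIndices k c) = 1) :
    Odd {v : Fin k × Fin k | v ∉ upperVerts k H ∧ (v.1 : ℕ) = c ∧
      boundaryDegree k H v = 1}.ncard := by
  set p := columnUpper k H c
  have hp0 : ¬ p 0 := fun ⟨_, h⟩ => hbottom _ rfl h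
  have htop : p (k - 1) := ⟨Nat.sub_one_lt_of_lt c.isLt, mem_upperVerts_of_top rfl⟩
  suffices {v : Fin k × Fin k | v ∉ upperVerts k H ∧ (v.1 : ℕ) = c ∧
      boundaryDegree k H v = 1}.ncard =
      #((range (k - 1)).filter fun j => ¬ p j ∧ ¬ (p (j - 1) ↔ p (j + 1))) from
    this ▸ odd_card_filter_exactly_one_neighbor p hp0 htop
  rw [← Set.ncard_coe_finset]
  refine Set.ncard_congr (fun v _ => v.2) ?_ ?_ ?_
  · rintro ⟨x, ⟨j, hj⟩⟩ ⟨hv, hx, hdeg⟩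
    obtain rfl : x = c := Fin.ext hx
    have := (boundaryDegree_eq_one_iff_columnUpper hH hbottom hborder hj).1 ⟨hv, hdeg⟩
    have hj' : j ≠ k - 1 := fun h => this.1 (h ▸ htop)
    simp only [coe_filter, mem_range, Set.mem_ofPred_eq]
    exact ⟨by omega, this⟩
  · rintro ⟨x, y⟩ ⟨x', y'⟩ ⟨-, hx, -⟩ ⟨-, hx', -⟩ hyy'
    simp only [Prod.mk.injEq]
    exact ⟨Fin.ext (hx.trans hx'.symm), Fin.ext hyy'⟩
  · intro j hj
    simp only [coe_filter, mem_range, Set.mem_ofPred_eq] at hj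
    have hjk : j < k := by omega
    obtain ⟨hv, hdeg⟩ := (boundaryDegree_eq_one_iff_columnUpper hH hbottom hborder hjk).2 hj.2
    exact ⟨(c, ⟨j, hjk⟩), ⟨hv, rfl, hdeg⟩, rfl⟩

end BoundaryDegree

/-- If no connected component of a diagonal graph `H` contains both a vertex of the top row
and a vertex of the bottom row, then every degree-1 vertex of the boundary graph `H_B` lies
on the left border (column 0) or the right border (column `k - 1`); moreover, the number of
degree-1 vertices of `H_B` on the left border is odd, and likewise on the right border. -/
theorem boundaryGraph_degree_one (k : ℕ) (hk : 2 ≤ k) (H : SimpleGraph (Fin k × Fin k))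
    (hH : IsDiagonalGraph k H)
    (hsep : ¬ ∃ u v : Fin k × Fin k,
      (u.2 : ℕ) = k - 1 ∧ (v.2 : ℕ) = 0 ∧ H.Reachable u v) :
    (∀ v : Fin k × Fin k, v ∉ upperVerts k H → boundaryDegree k H v = 1 →
      (v.1 : ℕ) = 0 ∨ (v.1 : ℕ) = k - 1) ∧
    Odd ({v : Fin k × Fin k | v ∉ upperVerts k H ∧ (v.1 : ℕ) = 0 ∧
      boundaryDegree k H v = 1}.ncard) ∧
    Odd ({v : Fin k × Fin k | v ∉ upperVerts k H ∧ (v.1 : ℕ) = k - 1 ∧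
      boundaryDegree k H v = 1}.ncard) := by
  have hbottom : ∀ v : Fin k × Fin k, (v.2 : ℕ) = 0 → v ∉ upperVerts k H :=
    fun v hv ⟨u, hu, hvu⟩ => hsep ⟨u, v, hu, hv, hvu.symm⟩
  refine ⟨fun v hv hdeg => ?_, ?_, ?_⟩
  · by_contra hinterior
    have := v.1.isLt
    exact boundaryDegree_ne_one_of_interior hH hbottom hv (by omega) (by omega) hdeg
  · exact odd_ncard_boundaryDegree_eq_one_of_border hH hbottom (c := ⟨0, by omega⟩)
      (by rw [adjacentIndices_zero hk, card_singleton])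
  · exact odd_ncard_boundaryDegree_eq_one_of_border hH hbottom (c := ⟨k - 1, by omega⟩)
      (by rw [adjacentIndices_last hk, card_singleton])
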